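/- For any graph U and any GR-rewrite rule with matching μ : P → U, the GR-rewrite step is always feasible: the span D̄(U, μ(ar)) ← SW → P (with legs D̄_μ and ρ, where ρ(ar) = ar, ρ(pr) = ρ(mr) = pr) is strongly labeled and hence has a pushout V in the category of graphs; moreover V is (isomorphic to) the graph obtained from U by redirecting all edges targeting μ(ar) to target μ(pr). -/

import Mathlib

open CategoryTheory

/-- A graph over a signature `Ω` with arity function `ar`: nodes, an (implicit) subset of
labeled nodes (those where `label` is `some`), and a successor function assigning to each
labeled node a string of nodes whose length is the arity of its label. Unlabeled nodes
have no successors. -/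
structure LGraph (Ω : Type) (ar : Ω → ℕ) where
  N : Type
  label : N → Option Ω
  succ : N → List N
  hlen : ∀ n f, label n = some f → (succ n).length = ar f
  hnone : ∀ n, label n = none → succ n = []

namespace LGraph

variable {Ω : Type} {ar : Ω → ℕ}

/-- A graph homomorphism: a map on nodes preserving labeledness, labels and successors. -/
@[ext]
structure Hom (G H : LGraph Ω ar) where
  toFun : G.N → H.N
  map_label : ∀ n f, G.label n = some f → H.label (toFun n) = some f
  map_succ : ∀ n f, G.label n = some f → H.succ (toFun n) = (G.succ n).map toFun

def Hom.id (G : LGraph Ω ar) : Hom G G :=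
  ⟨fun n => n, fun _ _ h => h, fun n _ _ => by simp⟩

def Hom.comp {G H K : LGraph Ω ar} (φ : Hom G H) (ψ : Hom H K) : Hom G K where
  toFun := fun n => ψ.toFun (φ.toFun n)
  map_label := fun n f h => ψ.map_label _ f (φ.map_label n f h)
  map_succ := fun n f h => by
    rw [ψ.map_succ _ f (φ.map_label n f h), φ.map_succ n f h, List.map_map]; rfl

instance : Category (LGraph Ω ar) where
  Hom := Hom
  id := Hom.id
  comp := Hom.comp
  id_comp := by intros; rfl
  comp_id := by intros; rfl
  assoc := by intros; rfl

/-- An edge of a graph: a labeled node together with a position among its successors. -/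
def Edge (G : LGraph Ω ar) := Σ n : G.N, Fin (G.succ n).length

lemma Edge.label_isSome {G : LGraph Ω ar} (e : G.Edge) : (G.label e.1).isSome := by
  have h2 : 0 < (G.succ e.1).length := Nat.lt_of_le_of_lt (Nat.zero_le _) e.2.isLt
  cases hl : G.label e.1 with
  | none => rw [G.hnone e.1 hl] at h2; simp at h2
  | some f => rfl

/-- The image of an edge under a homomorphism. -/
def Hom.edgeMap {G H : LGraph Ω ar} (φ : Hom G H) (e : G.Edge) : H.Edge :=
  ⟨φ.toFun e.1, ⟨e.2, by
    obtain ⟨f, hf⟩ := Option.isSome_iff_exists.mp e.label_isSome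
    rw [φ.map_succ e.1 f hf, List.length_map]; exact e.2.isLt⟩⟩

open Classical in
/-- The disconnected graph `D(G,E)`: nodes of `G` plus a fresh unlabeled node `n[i]`
for each edge `(n,i) ∈ E`, with each edge of `E` redirected to its fresh node. -/
noncomputable def D (G : LGraph Ω ar) (E : Set G.Edge) : LGraph Ω ar where
  N := G.N ⊕ {e : G.Edge // e ∈ E}
  label := Sum.elim G.label fun _ => none
  succ := Sum.elim
    (fun n => List.ofFn fun i : Fin (G.succ n).length =>
      if h : (⟨n, i⟩ : G.Edge) ∈ E then Sum.inr ⟨⟨n, i⟩, h⟩ else Sum.inl ((G.succ n).get i))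
    (fun _ => [])
  hlen := by
    rintro (n | e) f h
    · simpa using G.hlen n f h
    · simp at h
  hnone := by
    rintro (n | e) h
    · simp only [Sum.elim_inl] at h ⊢
      simp [List.ofFn_eq_nil_iff, G.hnone n h]
    · rfl

/-- The connection homomorphism `δ_{G,E} : D(G,E) → G`. -/
noncomputable def delta (G : LGraph Ω ar) (E : Set G.Edge) : Hom (G.D E) G where
  toFun := Sum.elim (fun n => n) (fun e => (G.succ e.1.1).get e.1.2)
  map_label := by
    rintro (n | e) f h
    · exact h
    · simp [D] at h
  map_succ := by
    rintro (n | e) f h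
    · simp only [D, Sum.elim_inl, List.map_ofFn]
      apply List.ext_getElem
      · simp
      · intro i h1 h2
        simp only [List.getElem_ofFn, Function.comp_apply]
        split <;> simp [List.get_eq_getElem]
    · simp [D] at h
end LGraph
namespace LGraph
variable {Ω : Type} {ar : Ω → ℕ}

/-- The underlying node map of the disconnected homomorphism `D_{φ,E}`. -/
def dmapFun {G H : LGraph Ω ar} (φ : Hom G H) (E : Set G.Edge) :
    (G.D E).N → (H.D (φ.edgeMap '' E)).N :=
  Sum.elim (fun n => Sum.inl (φ.toFun n))
    (fun e => Sum.inr ⟨φ.edgeMap e.1, Set.mem_image_of_mem _ e.2⟩)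

/-- `μ` is `Ω`-injective if it is injective on labeled nodes. -/
def OmegaInjective {G H : LGraph Ω ar} (μ : Hom G H) : Prop :=
  ∀ n n', (G.label n).isSome → (G.label n').isSome → μ.toFun n = μ.toFun n' → n = n'

/-- The conditions on the right leg `ρ : D(L,E) → R` of an LRR-rewrite rule:
unlabeled nodes of `L` are mapped to unlabeled nodes of `R`, injectively. -/
def IsLRRRule {L R : LGraph Ω ar} (E : Set L.Edge) (ρ : Hom (L.D E) R) : Prop :=
  (∀ n : L.N, L.label n = none → R.label (ρ.toFun (Sum.inl n)) = none) ∧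
  (∀ n n' : L.N, L.label n = none → L.label n' = none →
      ρ.toFun (Sum.inl n) = ρ.toFun (Sum.inl n') → n = n')

section Span
variable {G₀ G₁ G₂ : LGraph Ω ar}

/-- The relation on `N₁ + N₂` generated by a span: `φ₁(n₀) ∼ φ₂(n₀)`. -/
def spanRel (φ₁ : Hom G₀ G₁) (φ₂ : Hom G₀ G₂) : (G₁.N ⊕ G₂.N) → (G₁.N ⊕ G₂.N) → Prop :=
  fun x y => ∃ n₀, x = Sum.inl (φ₁.toFun n₀) ∧ y = Sum.inr (φ₂.toFun n₀)

/-- Label of a node of the disjoint union. -/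
def nodeLabel (G₁ G₂ : LGraph Ω ar) : (G₁.N ⊕ G₂.N) → Option Ω :=
  Sum.elim G₁.label G₂.label

/-- Successors of a node of the disjoint union. -/
def nodeSucc (G₁ G₂ : LGraph Ω ar) : (G₁.N ⊕ G₂.N) → List (G₁.N ⊕ G₂.N) :=
  Sum.elim (fun n => (G₁.succ n).map Sum.inl) (fun n => (G₂.succ n).map Sum.inr)

/-- A span of graphs is strongly labeled if in each equivalence class all labeled
nodes share the same label and have pairwise equivalent successors. -/
def StronglyLabeled (φ₁ : Hom G₀ G₁) (φ₂ : Hom G₀ G₂) : Prop :=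
  ∀ x y, Relation.EqvGen (spanRel φ₁ φ₂) x y →
    ∀ f g, nodeLabel G₁ G₂ x = some f → nodeLabel G₁ G₂ y = some g →
      f = g ∧ List.Forall₂ (Relation.EqvGen (spanRel φ₁ φ₂)) (nodeSucc G₁ G₂ x) (nodeSucc G₁ G₂ y)

open Classical in
/-- The candidate pushout graph of a span: nodes are the quotient of `N₁ + N₂`,
labeled classes are those containing a labeled node, labels and successors are
taken from a (chosen) labeled representative. -/
noncomputable def pushoutGraph (φ₁ : Hom G₀ G₁) (φ₂ : Hom G₀ G₂) : LGraph Ω ar where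
  N := Quot (spanRel φ₁ φ₂)
  label := fun c =>
    if h : ∃ x, Quot.mk _ x = c ∧ (nodeLabel G₁ G₂ x).isSome
    then nodeLabel G₁ G₂ h.choose else none
  succ := fun c =>
    if h : ∃ x, Quot.mk _ x = c ∧ (nodeLabel G₁ G₂ x).isSome
    then (nodeSucc G₁ G₂ h.choose).map (Quot.mk _) else []
  hlen := by
    intro c f h
    try dsimp only at h ⊢
    by_cases hx : ∃ x, Quot.mk _ x = c ∧ (nodeLabel G₁ G₂ x).isSome
    · rw [dif_pos hx] at h ⊢
      rw [List.length_map]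
      rcases hc : hx.choose with n | n <;> rw [hc] at h <;>
        simp only [nodeLabel, nodeSucc, Sum.elim_inl, Sum.elim_inr] at h ⊢ <;>
        rw [List.length_map]
      · exact G₁.hlen n f h
      · exact G₂.hlen n f h
    · rw [dif_neg hx] at h; simp at h
  hnone := by
    intro c h
    try dsimp only at h ⊢
    by_cases hx : ∃ x, Quot.mk _ x = c ∧ (nodeLabel G₁ G₂ x).isSome
    · rw [dif_pos hx] at h
      have := hx.choose_spec.2
      rw [h] at this; simp at this
    · rw [dif_neg hx]

end Span

open Classical in
/-- The disconnected graph `D̄(G,o)`: `G` plus a fresh unlabeled node `mr`, with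
all edges targeting `o` redirected to `mr`. -/
noncomputable def Dbar (G : LGraph Ω ar) (o : G.N) : LGraph Ω ar where
  N := G.N ⊕ Unit
  label := Sum.elim G.label fun _ => none
  succ := Sum.elim
    (fun n => (G.succ n).map fun t => if t = o then Sum.inr () else Sum.inl t)
    (fun _ => [])
  hlen := by
    rintro (n | u) f h
    · simp only [Sum.elim_inl] at h ⊢
      rw [List.length_map]; exact G.hlen n f h
    · simp at h
  hnone := by
    rintro (n | u) h
    · simp only [Sum.elim_inl] at h ⊢
      rw [G.hnone n h]; rfl
    · rfl

open Classical in
/-- The homomorphism `δ_μ : D̄(G,o) → G`, identity on `N_G`, sending `mr` to `o`. -/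
noncomputable def deltaBar (G : LGraph Ω ar) (o : G.N) : Hom (G.Dbar o) G where
  toFun := Sum.elim (fun n => n) fun _ => o
  map_label := by
    rintro (n | u) f h
    · exact h
    · simp [Dbar] at h
  map_succ := by
    rintro (n | u) f h
    · simp only [Dbar, Sum.elim_inl, List.map_map]
      symm
      refine (List.map_congr_left ?_).trans (List.map_id _)
      intro t ht
      by_cases h' : t = o <;> simp [h']
    · simp [Dbar] at h

open Classical in
/-- The graph obtained from `U` by redirecting all edges targeting `a` towards `b`. -/
noncomputable def redirect (U : LGraph Ω ar) (a b : U.N) : LGraph Ω ar where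
  N := U.N
  label := U.label
  succ := fun n => (U.succ n).map fun t => if t = a then b else t
  hlen := by intro n f h; (try dsimp only); rw [List.length_map]; exact U.hlen n f h
  hnone := by intro n h; (try dsimp only); rw [U.hnone n h]; rfl

/-- The graph `P` with two unlabeled nodes: `false` is `ar`, `true` is `pr`. -/
def P (Ω : Type) (ar : Ω → ℕ) : LGraph Ω ar :=
  ⟨Bool, fun _ => none, fun _ => [], fun _ _ h => by simp at h, fun _ _ => rfl⟩

/-- The switch graph `SW` with three unlabeled nodes: `some false` is `ar`,
`some true` is `pr`, `none` is `mr`. -/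
def SW (Ω : Type) (ar : Ω → ℕ) : LGraph Ω ar :=
  ⟨Option Bool, fun _ => none, fun _ => [], fun _ _ h => by simp at h, fun _ _ => rfl⟩

/-- `λ : SW → P`, sending `ar, mr ↦ ar` and `pr ↦ pr`. -/
def lamGR : Hom (SW Ω ar) (P Ω ar) :=
  ⟨fun x => x.getD false, fun _ _ h => by simp [SW] at h, fun _ _ h => by simp [SW] at h⟩

/-- `ρ : SW → P`, sending `ar ↦ ar` and `pr, mr ↦ pr`. -/
def rhoGR : Hom (SW Ω ar) (P Ω ar) :=
  ⟨fun x => x.getD true, fun _ _ h => by simp [SW] at h, fun _ _ h => by simp [SW] at h⟩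

/-- `D̄_μ : SW → D̄(U, μ(ar))`. -/
noncomputable def dbarMu {U : LGraph Ω ar} (μ : Hom (P Ω ar) U) :
    Hom (SW Ω ar) (U.Dbar (μ.toFun false)) where
  toFun := fun x => match x with
    | some b => Sum.inl (μ.toFun b)
    | none => Sum.inr ()
  map_label := fun _ _ h => by simp [SW] at h
  map_succ := fun _ _ h => by simp [SW] at h

/-- A graph with a single unlabeled node. -/
def oneUnlabeled (Ω : Type) (ar : Ω → ℕ) : LGraph Ω ar :=
  ⟨PUnit, fun _ => none, fun _ => [], fun _ _ h => by simp at h, fun _ _ => rfl⟩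

/-- A graph with a single node labeled `a` (looping on itself `ar a` times). -/
def singleLabeled (a : Ω) : LGraph Ω ar :=
  ⟨PUnit, fun _ => some a, fun _ => List.replicate (ar a) PUnit.unit,
   fun _ f h => by cases h; simp, fun _ h => by simp at h⟩

/-- The unique homomorphism from the one-point unlabeled graph to `singleLabeled a`. -/
def toSingle (a : Ω) : Hom (oneUnlabeled Ω ar) (singleLabeled a) :=
  ⟨fun _ => PUnit.unit, fun _ _ h => by simp [oneUnlabeled] at h,
   fun _ _ h => by simp [oneUnlabeled] at h⟩

end LGraph

/-! Every labeled node of the span `D̄(U, μ(ar)) ← SW → P` lies in `U`, and the map to `U`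
collapsing `mr` and the nodes of `P` onto their images is constant on equivalence classes,
so no class contains two labeled nodes and the span is trivially strongly labeled. Its pushout
only glues `mr` to `μ(pr)`: a cocone is determined by its values on `U`, and it is a graph
homomorphism out of `U` once edges into `mr` are read as edges into `μ(pr)`. -/

namespace LGraph

variable {Ω : Type} {ar : Ω → ℕ}

lemma hom_ext {G H : LGraph Ω ar} {φ ψ : G ⟶ H} (h : ∀ x, φ.toFun x = ψ.toFun x) : φ = ψ :=
  Hom.ext (funext h)

lemma toFun_congr {G H : LGraph Ω ar} {φ ψ : G ⟶ H} (h : φ = ψ) (x : G.N) :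
    φ.toFun x = ψ.toFun x :=
  h ▸ rfl

def Hom.ofUnlabeled {G H : LGraph Ω ar} (hG : ∀ n, G.label n = none) (f : G.N → H.N) :
    G ⟶ H where
  toFun := f
  map_label n _ h := by simp [hG n] at h
  map_succ n _ h := by simp [hG n] at h

section Span

variable {G₀ G₁ G₂ : LGraph Ω ar} {φ₁ : Hom G₀ G₁} {φ₂ : Hom G₀ G₂}

lemma eq_of_eqvGen_spanRel {α : Type*} (f : G₁.N ⊕ G₂.N → α)
    (hf : ∀ n₀, f (.inl (φ₁.toFun n₀)) = f (.inr (φ₂.toFun n₀))) {x y : G₁.N ⊕ G₂.N}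
    (h : Relation.EqvGen (spanRel φ₁ φ₂) x y) : f x = f y :=
  congrArg (Quot.lift f (by rintro _ _ ⟨n₀, rfl, rfl⟩; exact hf n₀)) (Quot.eqvGen_sound h)

lemma stronglyLabeled_of_labeled_unique
    (h : ∀ x y, Relation.EqvGen (spanRel φ₁ φ₂) x y → (nodeLabel G₁ G₂ x).isSome →
      (nodeLabel G₁ G₂ y).isSome → x = y) :
    StronglyLabeled φ₁ φ₂ := by
  intro x y hxy f g hx hy
  obtain rfl := h x y hxy (by simp [hx]) (by simp [hy])
  exact ⟨Option.some.inj (hx.symm.trans hy), List.forall₂_same.mpr fun z _ => .refl z⟩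

end Span

section Redirect

variable {G X : LGraph Ω ar} {o p : G.N}

noncomputable def dbarToRedirect (G : LGraph Ω ar) (o p : G.N) : G.Dbar o ⟶ G.redirect o p where
  toFun := Sum.elim id fun _ => p
  map_label := by
    rintro (n | _) f h
    · exact h
    · simp [Dbar] at h
  map_succ := by
    rintro (n | _) f h
    · simp only [Dbar, redirect, Sum.elim_inl, List.map_map]
      refine List.map_congr_left fun t _ => ?_
      by_cases ht : t = o <;> simp [ht]
    · simp [Dbar] at h

lemma toFun_eq_toFun_dbarToRedirect (g : G.Dbar o ⟶ X)
    (hg : g.toFun (.inr ()) = g.toFun (.inl p)) (x : (G.Dbar o).N) :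
    g.toFun x = g.toFun (.inl ((G.dbarToRedirect o p).toFun x)) := by
  rcases x with _ | _
  · rfl
  · exact hg

noncomputable def redirectLift (g : G.Dbar o ⟶ X) (hg : g.toFun (.inr ()) = g.toFun (.inl p)) :
    G.redirect o p ⟶ X where
  toFun n := g.toFun (.inl n)
  map_label n := g.map_label (.inl n)
  map_succ (n : G.N) f h := by
    have hd : (G.redirect o p).succ n = ((G.Dbar o).succ (.inl n)).map (G.dbarToRedirect o p).toFun :=
      (G.dbarToRedirect o p).map_succ (.inl n) f h
    rw [g.map_succ (.inl n) f h, hd, List.map_map]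
    exact List.map_congr_left fun x _ => toFun_eq_toFun_dbarToRedirect g hg x

lemma dbarToRedirect_comp_redirectLift (g : G.Dbar o ⟶ X)
    (hg : g.toFun (.inr ()) = g.toFun (.inl p)) :
    G.dbarToRedirect o p ≫ redirectLift g hg = g :=
  hom_ext fun x => (toFun_eq_toFun_dbarToRedirect g hg x).symm

lemma dbarToRedirect_cancel {φ ψ : G.redirect o p ⟶ X}
    (h : G.dbarToRedirect o p ≫ φ = G.dbarToRedirect o p ≫ ψ) : φ = ψ :=
  hom_ext fun n => toFun_congr h (.inl n)

end Redirect

section GRRewrite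

variable {U : LGraph Ω ar} (μ : P Ω ar ⟶ U)

lemma dbarMu_rhoGR_stronglyLabeled : StronglyLabeled (dbarMu μ) rhoGR := by
  apply stronglyLabeled_of_labeled_unique
  have labeled_mem_U : ∀ z, (nodeLabel (U.Dbar (μ.toFun false)) (P Ω ar) z).isSome →
      ∃ n, z = .inl (.inl n) := by
    rintro ((n | _) | _) hz
    · exact ⟨n, rfl⟩
    · simp [nodeLabel, Dbar] at hz
    · exact (Bool.false_ne_true hz).elim
  intro x y hxy hx hy
  obtain ⟨n, rfl⟩ := labeled_mem_U x hx
  obtain ⟨m, rfl⟩ := labeled_mem_U y hy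
  let toU : (U.Dbar (μ.toFun false)).N ⊕ (P Ω ar).N → U.N :=
    Sum.elim (Sum.elim id fun _ => μ.toFun true) μ.toFun
  have hU : toU (.inl (.inl n)) = toU (.inl (.inl m)) :=
    eq_of_eqvGen_spanRel toU (by rintro (_ | _ | _) <;> rfl) hxy
  rw [show n = m from hU]

lemma isPushout_dbarMu_rhoGR :
    IsPushout (dbarMu μ) rhoGR (U.dbarToRedirect (μ.toFun false) (μ.toFun true))
      (Hom.ofUnlabeled (fun _ => rfl) μ.toFun) := by
  set ν : P Ω ar ⟶ U.redirect (μ.toFun false) (μ.toFun true) :=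
    Hom.ofUnlabeled (fun _ => rfl) μ.toFun
  have comm : dbarMu μ ≫ U.dbarToRedirect _ _ = rhoGR ≫ ν :=
    hom_ext <| by rintro (_ | _ | _) <;> rfl
  have mr_eq (s : Limits.PushoutCocone (C := LGraph Ω ar) (dbarMu μ) rhoGR) :
      s.inl.toFun (.inr ()) = s.inl.toFun (.inl (μ.toFun true)) :=
    (toFun_congr s.condition none).trans (toFun_congr s.condition (some true)).symm
  refine .of_isColimit' ⟨comm⟩ <| Limits.PushoutCocone.IsColimit.mk comm
    (fun s => redirectLift s.inl (mr_eq s))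
    (fun s => dbarToRedirect_comp_redirectLift s.inl (mr_eq s))
    (fun s => hom_ext fun c => toFun_congr s.condition (some c))
    (fun s m hm _ => dbarToRedirect_cancel ?_)
  rw [hm, dbarToRedirect_comp_redirectLift]

end GRRewrite

end LGraph

/-- GR-rewrite steps are always feasible: the span
`D̄(U,μ(ar)) ← SW → P` (legs `D̄_μ` and `ρ`) is strongly labeled, and the graph
obtained from `U` by redirecting all edges targeting `μ(ar)` to `μ(pr)` is a pushout
of this span. -/
theorem gr_rewrite_feasible {Ω : Type} {ar : Ω → ℕ} (U : LGraph Ω ar)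
    (μ : LGraph.Hom (LGraph.P Ω ar) U) :
    LGraph.StronglyLabeled (LGraph.dbarMu μ) LGraph.rhoGR ∧
    ∃ (ρ' : LGraph.Hom (U.Dbar (μ.toFun false)) (U.redirect (μ.toFun false) (μ.toFun true)))
      (ν : LGraph.Hom (LGraph.P Ω ar) (U.redirect (μ.toFun false) (μ.toFun true))),
      IsPushout (C := LGraph Ω ar) (LGraph.dbarMu μ) LGraph.rhoGR ρ' ν :=
  ⟨LGraph.dbarMu_rhoGR_stronglyLabeled μ, _, _, LGraph.isPushout_dbarMu_rhoGR μ⟩
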